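/- Let ℓ be an odd prime and let U be a closed subgroup of GL₂(ℤ_ℓ) with U ⊆ V₁(ℓ). Suppose U surjects onto V₁(ℓ)/V₂(ℓ); that is, for every A ∈ V₁(ℓ) there exists u ∈ U such that u and A have the same reduction mod ℓ². Then U = V₁(ℓ). -/

import Mathlib

open Matrix

/-- The reduction-mod-`p^k` homomorphism `GL₂(ℤ_p) →* GL₂(ℤ/p^kℤ)`. -/
noncomputable def glReductionPow (p : ℕ) [Fact p.Prime] (k : ℕ) :
    GL (Fin 2) ℤ_[p] →* GL (Fin 2) (ZMod (p ^ k)) :=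
  Matrix.GeneralLinearGroup.map (PadicInt.toZModPow k)

/-- `V_k(p)`, the kernel of reduction mod `p^k`, as a subgroup of `GL₂(ℤ_p)`. -/
noncomputable def Vsub (p : ℕ) [Fact p.Prime] (k : ℕ) : Subgroup (GL (Fin 2) ℤ_[p]) :=
  (glReductionPow p k).ker

/-! For odd `p` and `k ≥ 1` the binomial theorem gives
`(1 + p^k B)^p ≡ 1 + p^(k+1) B (mod p^(k+2))`, so `p`-th powers carry `V_k / V_(k+1)` onto
`V_(k+1) / V_(k+2)`. Starting from `U ↠ V₁ / V₂`, induction shows that `U` meets every coset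
of every `V_k` in `V₁`, i.e. `U` is dense in `V₁`; being closed, it is all of `V₁`. -/

open Finset Filter Topology

theorem Nat.Prime.pow_add_two_dvd_choose_mul_pow {p k j : ℕ} (hp : p.Prime) (hodd : Odd p)
    (hk : 1 ≤ k) (hj : 2 ≤ j) : p ^ (k + 2) ∣ p.choose j * p ^ (k * j) := by
  have hp3 : 3 ≤ p := by
    have := hp.two_le; rcases hodd with ⟨m, rfl⟩; omega
  rcases lt_trichotomy j p with hjp | rfl | hjp
  · rw [pow_succ']
    exact mul_dvd_mul (hp.dvd_choose_self (by omega) hjp) (pow_dvd_pow p (by nlinarith))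
  · exact (pow_dvd_pow _ (by nlinarith)).mul_left _
  · simp [Nat.choose_eq_zero_of_lt hjp]

theorem exists_one_add_smul_pow_prime {S R : Type*} [CommRing S] [Ring R] [Algebra S R]
    {p k : ℕ} (hp : p.Prime) (hodd : Odd p) (hk : 1 ≤ k) (b : R) :
    ∃ c : R,
      (1 + (p : S) ^ k • b) ^ p = 1 + (p : S) ^ (k + 1) • b + (p : S) ^ (k + 2) • c := by
  obtain ⟨m, hm⟩ : ∃ m, p + 1 = m + 1 + 1 + 1 := ⟨p - 2, by have := hp.two_le; omega⟩
  choose d hd using fun i => hp.pow_add_two_dvd_choose_mul_pow hodd hk (by omega : 2 ≤ i + 2)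
  refine ⟨∑ i ∈ range (m + 1), (d i : S) • b ^ (i + 2), ?_⟩
  have hterm : ∀ i, ((p : S) ^ k • b) ^ i * 1 ^ (p - i) * (p.choose i : R)
      = ((p.choose i * p ^ (k * i) : ℕ) : S) • b ^ i := by
    intro i
    rw [one_pow, mul_one, smul_pow, ← Nat.cast_comm, ← nsmul_eq_mul,
      ← Nat.cast_smul_eq_nsmul S, smul_smul, ← pow_mul]
    push_cast
    ring_nf
  rw [add_comm 1, (Commute.one_right _).add_pow, hm, sum_range_succ', sum_range_succ']
  simp only [hterm, hd]
  simp only [zero_add, mul_zero, mul_one, pow_zero, pow_one, Nat.choose_zero_right,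
    Nat.choose_one_right, ← pow_succ', Nat.cast_one, one_smul, Nat.cast_mul, Nat.cast_pow,
    ← smul_smul, ← smul_sum]
  abel

namespace PadicInt

variable {p : ℕ} [Fact p.Prime]

theorem toZModPow_eq_iff {k : ℕ} {x y : ℤ_[p]} :
    toZModPow k x = toZModPow k y ↔ ∃ z, x = y + (p : ℤ_[p]) ^ k * z := by
  rw [← sub_eq_zero, ← map_sub, ← RingHom.mem_ker, ker_toZModPow, Ideal.mem_span_singleton']
  refine exists_congr fun z => ?_
  rw [mul_comm, eq_sub_iff_add_eq, add_comm, eq_comm]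

theorem tendsto_of_toZModPow_eq {x : ℕ → ℤ_[p]} {y : ℤ_[p]}
    (h : ∀ k, toZModPow k (x k) = toZModPow k y) : Tendsto x atTop (𝓝 y) := by
  have hnorm : ∀ k, ‖x k - y‖ ≤ (p : ℝ)⁻¹ ^ k := fun k => by
    rw [inv_pow, ← zpow_natCast, ← _root_.zpow_neg, norm_le_pow_iff_mem_span_pow,
      ← ker_toZModPow, RingHom.mem_ker, map_sub, h, sub_self]
  rw [tendsto_iff_norm_sub_tendsto_zero]
  refine squeeze_zero (fun _ => norm_nonneg _) hnorm
    (tendsto_pow_atTop_nhds_zero_of_lt_one (by positivity) (inv_lt_one_of_one_lt₀ ?_))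
  exact_mod_cast (Fact.out : p.Prime).one_lt

end PadicInt

namespace Matrix

variable {p : ℕ} [Fact p.Prime] {m n : Type*}

open PadicInt

theorem map_toZModPow_eq_iff {k : ℕ} {M N : Matrix m n ℤ_[p]} :
    M.map (toZModPow k) = N.map (toZModPow k) ↔ ∃ Z, M = N + (p : ℤ_[p]) ^ k • Z := by
  constructor
  · intro h
    choose Z hZ using fun i j => toZModPow_eq_iff.1 (congr_fun₂ h i j)
    exact ⟨of Z, ext fun i j => hZ i j⟩
  · rintro ⟨Z, rfl⟩
    ext i j
    exact toZModPow_eq_iff.2 ⟨Z i j, rfl⟩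

theorem tendsto_of_map_toZModPow_eq {M : ℕ → Matrix m n ℤ_[p]} {N : Matrix m n ℤ_[p]}
    (h : ∀ k, (M k).map (toZModPow k) = N.map (toZModPow k)) : Tendsto M atTop (𝓝 N) :=
  tendsto_pi_nhds.2 fun i => tendsto_pi_nhds.2 fun j =>
    tendsto_of_toZModPow_eq fun k => congr_fun₂ (h k) i j

theorem isUnit_one_add_p_smul [Fintype n] [DecidableEq n] (B : Matrix n n ℤ_[p]) :
    IsUnit (1 + (p : ℤ_[p]) • B) := by
  rw [isUnit_iff_isUnit_det, det_one_add_smul, add_assoc, ← sub_neg_eq_add]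
  refine IsLocalRing.isUnit_one_sub_self_of_mem_nonunits _ (mem_nonunits.2 ?_)
  rw [norm_neg, norm_lt_one_iff_dvd]
  exact dvd_add (dvd_mul_left _ _) (dvd_mul_of_dvd_right (dvd_pow_self _ two_ne_zero) _)

end Matrix

section GeneralLinearGroup

open PadicInt

variable {p : ℕ} [Fact p.Prime]

theorem glReductionPow_eq_iff {k : ℕ} {x y : GL (Fin 2) ℤ_[p]} :
    glReductionPow p k x = glReductionPow p k y ↔
      ∃ Z, (x : Matrix (Fin 2) (Fin 2) ℤ_[p]) = y + (p : ℤ_[p]) ^ k • Z :=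
  Units.ext_iff.trans map_toZModPow_eq_iff

theorem mem_Vsub_iff {k : ℕ} {x : GL (Fin 2) ℤ_[p]} :
    x ∈ Vsub p k ↔
      ∃ Z, (x : Matrix (Fin 2) (Fin 2) ℤ_[p]) = 1 + (p : ℤ_[p]) ^ k • Z := by
  rw [Vsub, MonoidHom.mem_ker, ← map_one (glReductionPow p k), glReductionPow_eq_iff,
    Units.val_one]

theorem tendsto_of_glReductionPow_eq {u : ℕ → GL (Fin 2) ℤ_[p]} {A : GL (Fin 2) ℤ_[p]}
    (h : ∀ k, glReductionPow p k (u k) = glReductionPow p k A) : Tendsto u atTop (𝓝 A) := by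
  have hinv : ∀ k, glReductionPow p k (u k)⁻¹ = glReductionPow p k A⁻¹ := by simp [h]
  rw [Units.isInducing_embedProduct.tendsto_nhds_iff, Units.embedProduct_apply, nhds_prod_eq]
  exact (tendsto_of_map_toZModPow_eq fun k => congr_arg Units.val (h k)).prodMk
    ((MulOpposite.continuous_op.tendsto _).comp
      (tendsto_of_map_toZModPow_eq fun k => congr_arg Units.val (hinv k)))

theorem exists_mem_glReductionPow_eq_succ (hodd : Odd p) {U : Subgroup (GL (Fin 2) ℤ_[p])}
    {k : ℕ}
    (hU : ∀ A ∈ Vsub p 1, ∃ u ∈ U, glReductionPow p (k + 2) u = glReductionPow p (k + 2) A)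
    {A : GL (Fin 2) ℤ_[p]} (hA : A ∈ Vsub p 1) :
    ∃ w ∈ U, glReductionPow p (k + 3) w = glReductionPow p (k + 3) A := by
  -- Write `A = u (1 + p^(k+2) B)` with `u ∈ U`, and lift `1 + p^(k+1) B ∈ V₁` to `v ∈ U`
  -- modulo `p^(k+2)`: then `u v^p ≡ A` modulo `p^(k+3)`.
  obtain ⟨u, hu, hAu⟩ := hU A hA
  obtain ⟨Z, hZ⟩ := glReductionPow_eq_iff.1 hAu.symm
  set B := (↑u⁻¹ : Matrix (Fin 2) (Fin 2) ℤ_[p]) * Z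
  have huB : (u : Matrix (Fin 2) (Fin 2) ℤ_[p]) * B = Z := by
    rw [← mul_assoc, Units.mul_inv, one_mul]
  obtain ⟨h, hh⟩ : ∃ h : GL (Fin 2) ℤ_[p],
      (h : Matrix (Fin 2) (Fin 2) ℤ_[p]) = 1 + (p : ℤ_[p]) • ((p : ℤ_[p]) ^ k • B) :=
    ⟨_, (isUnit_one_add_p_smul _).unit_spec⟩
  obtain ⟨v, hv, hvh⟩ := hU h (mem_Vsub_iff.2 ⟨_, by rw [hh, pow_one]⟩)
  obtain ⟨Y, hY⟩ := glReductionPow_eq_iff.1 hvh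
  have hv' : (v : Matrix (Fin 2) (Fin 2) ℤ_[p]) =
      1 + (p : ℤ_[p]) ^ (k + 1) • (B + (p : ℤ_[p]) • Y) := by
    rw [hY, hh]
    module
  obtain ⟨C, hC⟩ := exists_one_add_smul_pow_prime (S := ℤ_[p]) Fact.out hodd
    (Nat.le_add_left 1 k) (B + (p : ℤ_[p]) • Y)
  refine ⟨u * v ^ p, mul_mem hu (pow_mem hv p), glReductionPow_eq_iff.2 ⟨u * (Y + C), ?_⟩⟩
  rw [Units.val_mul, Units.val_pow_eq_pow_val, hv', hC, hZ, ← huB]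
  simp only [mul_add, mul_smul_comm, mul_one]
  module

theorem exists_mem_glReductionPow_eq (hodd : Odd p) {U : Subgroup (GL (Fin 2) ℤ_[p])}
    (h2 : ∀ A ∈ Vsub p 1, ∃ u ∈ U, glReductionPow p 2 u = glReductionPow p 2 A) :
    ∀ k, ∀ A ∈ Vsub p 1, ∃ u ∈ U, glReductionPow p k u = glReductionPow p k A
  | 0, A, _ => ⟨1, U.one_mem, glReductionPow_eq_iff.2 ⟨1 - A, by simp⟩⟩
  | 1, _, hA => ⟨1, U.one_mem, by rw [map_one]; exact (MonoidHom.mem_ker.1 hA).symm⟩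
  | 2, A, hA => h2 A hA
  | k + 3, _, hA =>
    exists_mem_glReductionPow_eq_succ hodd (exists_mem_glReductionPow_eq hodd h2 (k + 2)) hA

end GeneralLinearGroup

/-- For an odd prime `ℓ`, a closed subgroup of `V₁(ℓ)` surjecting onto `V₁(ℓ)/V₂(ℓ)`
equals `V₁(ℓ)`. -/
theorem stmt2 (p : ℕ) [Fact p.Prime] (hodd : Odd p)
    (U : Subgroup (GL (Fin 2) ℤ_[p]))
    (hclosed : IsClosed (U : Set (GL (Fin 2) ℤ_[p])))
    (hsub : U ≤ Vsub p 1)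
    (hsurj : ∀ A ∈ Vsub p 1, ∃ u ∈ U, glReductionPow p 2 u = glReductionPow p 2 A) :
    U = Vsub p 1 := by
  refine le_antisymm hsub fun A hA => ?_
  choose u hu hred using fun k => exists_mem_glReductionPow_eq hodd hsurj k A hA
  exact hclosed.mem_of_tendsto (tendsto_of_glReductionPow_eq hred) (.of_forall hu)
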